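/- arXiv:1702.05819 — 4 statements merged into one kernel-verified Lean document; each statement's English description precedes it below -/
import Mathlib

section
/- Let k ≥ 2 and let {t_n} be the 2k-nacci sequence. Then ν_2(t_n) = 0 if n ≡ 1, 2, ..., or 2k (mod 2k+1). -/
/-!
Reducing modulo 2, the sequence `t` and the indicator of `2k + 1 ∤ n` satisfy the same
recurrence of order `2k` with the same initial values, hence agree. For the indicator: among the
`2k` consecutive integers `n - 1, …, n - 2k` at most one is divisible by `2k + 1`, and exactly
one unless `2k + 1 ∣ n`, so their indicator values sum to `2k - [2k + 1 ∤ n] ≡ [2k + 1 ∤ n]`.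
-/

open Finset

theorem eq_of_sum_Icc_recurrence {R : Type*} [AddCommMonoid R] {d : ℕ} {u v : ℕ → R}
    (hinit : ∀ n < d, u n = v n)
    (hu : ∀ n, d ≤ n → u n = ∑ i ∈ Icc 1 d, u (n - i))
    (hv : ∀ n, d ≤ n → v n = ∑ i ∈ Icc 1 d, v (n - i)) : u = v := by
  funext n
  induction n using Nat.strong_induction_on with
  | _ n ih =>
    rcases Nat.lt_or_ge n d with hn | hn
    · exact hinit n hn
    · rw [hu n hn, hv n hn]
      exact sum_congr rfl fun i hi => ih _ (by simp only [mem_Icc] at hi; omega)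

theorem card_filter_dvd_sub_Icc {d n : ℕ} (hn : d ≤ n) :
    #{i ∈ Icc 1 d | d + 1 ∣ n - i} = if d + 1 ∣ n then 0 else 1 := by
  have hfilter : {i ∈ Icc 1 d | d + 1 ∣ n - i} = {i ∈ Icc 1 d | i = n % (d + 1)} := by
    refine filter_congr fun i hi => ?_
    rw [mem_Icc] at hi
    rw [← Nat.modEq_iff_dvd' (by omega), Nat.ModEq, Nat.mod_eq_of_lt (by omega)]
  have hmod : n % (d + 1) < d + 1 := Nat.mod_lt n d.succ_pos
  rw [hfilter, filter_eq']
  simp only [mem_Icc, Nat.dvd_iff_mod_eq_zero]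
  split_ifs <;> simp <;> omega

theorem indicator_not_dvd_eq_sum_Icc {k n : ℕ} (hn : 2 * k ≤ n) :
    (if 2 * k + 1 ∣ n then 0 else 1 : ZMod 2) =
      ∑ i ∈ Icc 1 (2 * k), if 2 * k + 1 ∣ n - i then 0 else 1 := by
  have hsummand : ∀ i, (if 2 * k + 1 ∣ n - i then 0 else 1 : ZMod 2) =
      1 - if 2 * k + 1 ∣ n - i then 1 else 0 := fun i => by split_ifs <;> simp
  simp only [hsummand, sum_sub_distrib, sum_const, Nat.card_Icc, sum_boole,
    card_filter_dvd_sub_Icc hn]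
  have htwo : (2 : ZMod 2) = 0 := rfl
  split_ifs <;> simp [htwo]

theorem twoknacci_val_zero_general (k : ℕ) (t : ℕ → ℕ)
    (h0 : t 0 = 0)
    (h1 : ∀ n, 1 ≤ n → n ≤ 2 * k - 1 → t n = 1)
    (hrec : ∀ n, 2 * k ≤ n → t n = ∑ i ∈ Finset.Icc 1 (2 * k), t (n - i)) :
    ∀ n : ℕ, n % (2 * k + 1) ≠ 0 → padicValNat 2 (t n) = 0 := by
  have parity : (fun n => (t n : ZMod 2)) = fun n => if 2 * k + 1 ∣ n then 0 else 1 := by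
    refine eq_of_sum_Icc_recurrence (d := 2 * k) (fun n hn => ?_)
      (fun n hn => by simp only [hrec n hn, Nat.cast_sum])
      (fun n hn => indicator_not_dvd_eq_sum_Icc hn)
    rcases n.eq_zero_or_pos with rfl | hpos
    · simp [h0]
    · rw [h1 n hpos (by omega), if_neg (Nat.not_dvd_of_pos_of_lt hpos (by omega)), Nat.cast_one]
  intro n hn
  have hodd : Odd (t n) := by
    rw [← ZMod.natCast_eq_one_iff_odd]
    simpa [Nat.dvd_iff_mod_eq_zero, hn] using congr_fun parity n
  exact padicValNat.eq_zero_of_not_dvd hodd.not_two_dvd_nat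

theorem twoknacci_val_zero (k : ℕ) (hk : 2 ≤ k) (t : ℕ → ℕ)
    (h0 : t 0 = 0)
    (h1 : ∀ n, 1 ≤ n → n ≤ 2 * k - 1 → t n = 1)
    (hrec : ∀ n, 2 * k ≤ n → t n = ∑ i ∈ Finset.Icc 1 (2 * k), t (n - i)) :
    ∀ n : ℕ, n % (2 * k + 1) ≠ 0 → padicValNat 2 (t n) = 0 :=
  twoknacci_val_zero_general k t h0 h1 hrec
end

section
/- Let k ≥ 2, let {t_n} be the 2k-nacci sequence, let T_n denote the column vector (t_n, t_{n+1}, ..., t_{n+2k-1})^T, and let B_0 = (t_{i+j})_{0≤i,j≤2k-1}. Then for all positive integers n and w, t_{n+w} = T_n^T B_0^{-1} T_w. -/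
/-!
By the recurrence, every shift `m ↦ t (m + w)` is a rational combination `∑ⱼ cⱼ t (m + j)` of
the first `2k` shifts. Evaluated at `m < 2k` this says `T w = B₀ c`, and at `m = n` it says
`t (n + w) = T n ⬝ c`, so the formula holds once `B₀` is invertible. Modulo 2 the recurrence
becomes `t (n + 2k + 1) ≡ t n`, hence `t n` is odd exactly when `2k + 1 ∤ n`; so `B₀ mod 2` is the
all-ones matrix minus the pattern of `2k + 1 ∣ i + j`, which has trivial kernel, and `det B₀` is odd.
-/

open Finset

theorem add_eq_two_mul_of_sum_recurrence {d : ℕ} {t : ℕ → ℕ}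
    (hrec : ∀ n, d ≤ n → t n = ∑ i ∈ Icc 1 d, t (n - i)) (hd : 0 < d) {n : ℕ} (hn : d ≤ n) :
    t (n + 1) + t (n - d) = 2 * t n := by
  have hrange (m : ℕ) (hm : d ≤ m) : t m = ∑ k ∈ range d, t (m - (k + 1)) := by
    rw [hrec m hm, ← Ico_add_one_right_eq_Icc, sum_Ico_eq_sum_range, Nat.add_sub_cancel]
    simp only [add_comm 1]
  obtain ⟨e, rfl⟩ : ∃ e, d = e + 1 := ⟨d - 1, by omega⟩
  have htn := hrange n hn
  rw [sum_range_succ] at htn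
  rw [hrange (n + 1) (by omega), sum_range_succ']
  simp only [Nat.add_sub_add_right, zero_add, Nat.add_sub_cancel]
  omega

theorem periodic_mod_two_of_sum_recurrence {d : ℕ} {t : ℕ → ℕ}
    (hrec : ∀ n, d ≤ n → t n = ∑ i ∈ Icc 1 d, t (n - i)) (hd : 0 < d) :
    Function.Periodic (fun n => t n % 2) (d + 1) := fun n => by
  have := add_eq_two_mul_of_sum_recurrence hrec hd (n := n + d) (by omega)
  rw [Nat.add_sub_cancel] at this
  simp only [← add_assoc]
  omega

theorem shift_mem_span_shifts_of_sum_recurrence {R : Type*} [CommSemiring R] {d : ℕ} {u : ℕ → R}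
    (hrec : ∀ n, d ≤ n → u n = ∑ i ∈ Icc 1 d, u (n - i)) (w : ℕ) :
    (fun m => u (m + w)) ∈ Submodule.span R (Set.range fun j : Fin d => fun m => u (m + j)) := by
  induction w using Nat.strong_induction_on with
  | _ w ih =>
    rcases Nat.lt_or_ge w d with hw | hw
    · exact Submodule.subset_span ⟨⟨w, hw⟩, rfl⟩
    · have hsum : (fun m => u (m + w)) = ∑ i ∈ Icc 1 d, fun m => u (m + (w - i)) := by
        ext m
        rw [hrec _ (by omega), Finset.sum_apply]
        exact sum_congr rfl fun i hi => by rw [Nat.add_sub_assoc (by simp at hi; omega)]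
      rw [hsum]
      exact Submodule.sum_mem _ fun i hi => ih _ (by simp at hi; omega)

theorem Nat.dvd_iff_eq_zero_or_eq_of_lt_two_mul {a m : ℕ} (h : m < 2 * a) :
    a ∣ m ↔ m = 0 ∨ m = a := by
  refine ⟨fun ⟨q, hq⟩ => ?_, by rintro (rfl | rfl) <;> simp⟩
  have : q < 2 := Nat.lt_of_mul_lt_mul_left (a := a) (by omega)
  interval_cases q <;> simp [hq]

theorem det_of_ite_dvd_add_ne_zero {R : Type*} [CommRing R] [IsDomain R] {d : ℕ} (hd : 2 ≤ d) :
    (Matrix.of fun i j : Fin d => if d + 1 ∣ (i + j : ℕ) then (0 : R) else 1).det ≠ 0 := by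
  rw [Ne, ← Matrix.exists_mulVec_eq_zero_iff]
  rintro ⟨v, hv0, hv⟩
  have hdvd (i j : Fin d) : d + 1 ∣ (i + j : ℕ) ↔ (i : ℕ) + j = 0 ∨ (i : ℕ) + j = d + 1 :=
    Nat.dvd_iff_eq_zero_or_eq_of_lt_two_mul (by omega)
  have row (i : Fin d) :
      ∑ j, v j - ∑ j ∈ univ.filter (fun j : Fin d => d + 1 ∣ (i + j : ℕ)), v j = 0 := by
    have hvi := congrFun hv i
    simp only [Matrix.mulVec, dotProduct, Matrix.of_apply, Pi.zero_apply] at hvi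
    rw [← hvi, sum_filter, ← sum_sub_distrib]
    refine sum_congr rfl fun j _ => ?_
    split_ifs <;> simp [*]
  -- Row 1 has no zero entry, and each column `j ≠ 1` has exactly one.
  have hsum : ∑ j, v j = 0 := by
    have hempty : univ.filter (fun j : Fin d => d + 1 ∣ (1 + j : ℕ)) = ∅ :=
      filter_false_of_mem fun j _ => by rw [Nat.dvd_iff_eq_zero_or_eq_of_lt_two_mul] <;> omega
    simpa [hempty] using row ⟨1, by omega⟩
  have hpartner (j : Fin d) (hj : (j : ℕ) ≠ 1) : v j = 0 := by
    obtain ⟨i, hi⟩ : ∃ i : Fin d, (i : ℕ) + j = 0 ∨ (i : ℕ) + j = d + 1 := by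
      by_cases hj0 : (j : ℕ) = 0
      · exact ⟨⟨0, by omega⟩, by simp only; omega⟩
      · exact ⟨⟨d + 1 - j, by omega⟩, by simp only; omega⟩
    have hsingle : univ.filter (fun j' : Fin d => d + 1 ∣ (i + j' : ℕ)) = {j} := by
      ext j'
      simp only [mem_filter, mem_univ, true_and, mem_singleton, hdvd, Fin.ext_iff]
      omega
    simpa [hsum, hsingle] using row i
  refine hv0 (funext fun j => show v j = 0 from ?_)
  by_cases hj : (j : ℕ) = 1
  · rw [← hsum, eq_comm, sum_eq_single_of_mem j (mem_univ _)]
    exact fun j' _ hj' => hpartner j' (by rw [Ne, Fin.ext_iff] at hj'; omega)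
  · exact hpartner j hj

theorem twoKnacci_two_mul (k : ℕ) (hk : 1 ≤ k) (t : ℕ → ℕ) (h0 : t 0 = 0)
    (h1 : ∀ n, 1 ≤ n → n ≤ 2 * k - 1 → t n = 1)
    (hrec : ∀ n, 2 * k ≤ n → t n = ∑ i ∈ Icc 1 (2 * k), t (n - i)) :
    t (2 * k) = 2 * k - 1 := by
  have hsplit : 2 * k = 2 * k - 1 + 1 := by omega
  rw [hrec _ le_rfl, hsplit, sum_Icc_succ_top (by omega), ← hsplit, Nat.sub_self, h0, add_zero]
  rw [sum_congr rfl fun i hi => h1 _ (by simp at hi; omega) (by simp at hi; omega)]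
  simp

theorem twoKnacci_mod_two (k : ℕ) (hk : 1 ≤ k) (t : ℕ → ℕ) (h0 : t 0 = 0)
    (h1 : ∀ n, 1 ≤ n → n ≤ 2 * k - 1 → t n = 1)
    (hrec : ∀ n, 2 * k ≤ n → t n = ∑ i ∈ Icc 1 (2 * k), t (n - i)) (n : ℕ) :
    t n % 2 = if 2 * k + 1 ∣ n then 0 else 1 := by
  have hper : t (n % (2 * k + 1)) % 2 = t n % 2 :=
    (periodic_mod_two_of_sum_recurrence hrec (by omega)).map_mod_nat n
  rw [← hper]
  simp only [Nat.dvd_iff_mod_eq_zero]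
  have hr : n % (2 * k + 1) < 2 * k + 1 := Nat.mod_lt _ (by omega)
  generalize n % (2 * k + 1) = r at hr ⊢
  rcases Nat.lt_or_ge r (2 * k) with hr' | hr'
  · rcases Nat.eq_zero_or_pos r with rfl | hpos
    · simp [h0]
    · simp [h1 r hpos (by omega), hpos.ne']
  · obtain rfl : r = 2 * k := by omega
    rw [twoKnacci_two_mul k hk t h0 h1 hrec, if_neg (by omega)]
    omega

theorem twoKnacci_hankel_det_ne_zero (k : ℕ) (hk : 1 ≤ k) (t : ℕ → ℕ) (h0 : t 0 = 0)
    (h1 : ∀ n, 1 ≤ n → n ≤ 2 * k - 1 → t n = 1)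
    (hrec : ∀ n, 2 * k ≤ n → t n = ∑ i ∈ Icc 1 (2 * k), t (n - i)) :
    (Matrix.of fun i j : Fin (2 * k) => (t (i + j) : ℚ)).det ≠ 0 := by
  let N : Matrix (Fin (2 * k)) (Fin (2 * k)) ℤ := Matrix.of fun i j => (t (i + j) : ℤ)
  have hmod : N.map (fun x => (x : ZMod 2)) =
      Matrix.of fun i j : Fin (2 * k) => if 2 * k + 1 ∣ (i + j : ℕ) then 0 else 1 := by
    ext i j
    simp only [N, Matrix.map_apply, Matrix.of_apply, Int.cast_natCast]
    rw [← ZMod.natCast_mod, twoKnacci_mod_two k hk t h0 h1 hrec]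
    split_ifs <;> simp
  have hodd : (N.det : ZMod 2) ≠ 0 := by
    rw [Int.cast_det, hmod]
    exact det_of_ite_dvd_add_ne_zero (by omega)
  have hcast :
      Matrix.of (fun i j : Fin (2 * k) => (t (i + j) : ℚ)) = N.map (fun x => (x : ℚ)) := by
    ext i j
    simp [N]
  rw [hcast, ← Int.cast_det, Int.cast_ne_zero]
  exact fun h => hodd (by simp [h])

theorem twoknacci_reduction_formula (k : ℕ) (hk : 2 ≤ k) (t : ℕ → ℕ)
    (h0 : t 0 = 0)
    (h1 : ∀ n, 1 ≤ n → n ≤ 2 * k - 1 → t n = 1)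
    (hrec : ∀ n, 2 * k ≤ n → t n = ∑ i ∈ Finset.Icc 1 (2 * k), t (n - i))
    (B0 : Matrix (Fin (2 * k)) (Fin (2 * k)) ℚ)
    (hB0 : ∀ i j, B0 i j = t ((i : ℕ) + (j : ℕ)))
    (T : ℕ → Fin (2 * k) → ℚ)
    (hT : ∀ n i, T n i = t (n + (i : ℕ))) :
    ∀ n w : ℕ, 1 ≤ n → 1 ≤ w →
      (t (n + w) : ℚ) = dotProduct (T n) (B0⁻¹.mulVec (T w)) := by
  intro n w _ _
  have hB0_det : IsUnit B0.det := by
    rw [isUnit_iff_ne_zero, show B0 = Matrix.of _ from Matrix.ext hB0]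
    exact twoKnacci_hankel_det_ne_zero k (by omega) t h0 h1 hrec
  have hrecℚ : ∀ n, 2 * k ≤ n → (t n : ℚ) = ∑ i ∈ Icc 1 (2 * k), (t (n - i) : ℚ) :=
    fun n hn => by rw [hrec n hn, Nat.cast_sum]
  obtain ⟨c, hc⟩ := (Submodule.mem_span_range_iff_exists_fun ℚ).1
    (shift_mem_span_shifts_of_sum_recurrence hrecℚ w)
  have hshift (m : ℕ) : ∑ j : Fin (2 * k), (t (m + (j : ℕ)) : ℚ) * c j = t (m + w) := by
    simpa [mul_comm] using congrFun hc m
  have hTw : T w = B0.mulVec c := funext fun i => by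
    rw [hT, Matrix.mulVec, dotProduct, add_comm, ← hshift]
    simp only [hB0]
  rw [hTw, Matrix.mulVec_mulVec, Matrix.nonsing_inv_mul _ hB0_det, Matrix.one_mulVec, dotProduct,
    ← hshift]
  simp only [hT]
end

section
/- Let k ≥ 2 and let {t_n} be the 2k-nacci sequence. Then for all l ≥ 0 and 0 ≤ j ≤ 2k-1, t_{2^l(2k+1)+j} ≡ t_j (mod 2^{l+1}). -/
/-!
Subtracting two consecutive instances of the recurrence gives the three-term relation
`t (n + K + 1) = 2 t (n + K) - t n` with `K = 2k`, i.e. `t` is killed by `P(E) = E^(K+1) - 2 E^K + 1`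
for the shift `E`. Modulo `P`, `E^(K+1) ≡ 1 + 2 (E^K - 1)`, and `(1 + 2x)^(2^l) ≡ 1 [mod 2^(l+1)]`
by repeated squaring, so `E^(2^l (K+1)) - 1` is a multiple of `P` plus `2^(l+1)` times an operator;
applied to `t` this is the congruence.
-/

open Polynomial Finset

theorem exists_one_add_two_mul_pow_two_pow {R : Type*} [CommRing R] (x : R) (l : ℕ) :
    ∃ y, (1 + 2 * x) ^ 2 ^ l = 1 + 2 ^ (l + 1) * y := by
  induction l with
  | zero => exact ⟨x, by simp⟩
  | succ l ih =>
    obtain ⟨y, hy⟩ := ih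
    exact ⟨y + 2 ^ l * y ^ 2, by rw [pow_succ, pow_mul, hy]; ring⟩

theorem exists_sub_two_mul_pow_add_one_dvd {R : Type*} [CommRing R] (x : R) (K l : ℕ) :
    ∃ y, x ^ (K + 1) - 2 * x ^ K + 1 ∣ x ^ (2 ^ l * (K + 1)) - (1 + 2 ^ (l + 1) * y) := by
  obtain ⟨y, hy⟩ := exists_one_add_two_mul_pow_two_pow (x ^ K - 1) l
  refine ⟨y, ?_⟩
  rw [← hy, pow_mul', show x ^ (K + 1) - 2 * x ^ K + 1 = x ^ (K + 1) - (1 + 2 * (x ^ K - 1)) by ring]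
  exact sub_dvd_pow_sub_pow _ _ _

theorem sum_Icc_one_eq_sum_range {M : Type*} [AddCommMonoid M] (f : ℕ → M) (K : ℕ) :
    ∑ i ∈ Icc 1 K, f i = ∑ i ∈ range K, f (i + 1) := by
  rw [← Ico_add_one_right_eq_Icc, sum_Ico_eq_sum_range, Nat.add_sub_cancel]
  simp only [add_comm 1]

theorem add_eq_add_of_forall_eq_sum_Icc {M : Type*} [AddCommMonoid M] {t : ℕ → M} {K : ℕ}
    (hrec : ∀ n, K ≤ n → t n = ∑ i ∈ Icc 1 K, t (n - i)) (n : ℕ) :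
    t (n + K + 1) + t n = t (n + K) + t (n + K) := by
  have hnext : t (n + K + 1) = ∑ i ∈ range K, t (n + K - i) := by
    rw [hrec _ (by omega), sum_Icc_one_eq_sum_range]
    simp only [Nat.add_sub_add_right]
  have hcurr : t (n + K) = ∑ i ∈ range K, t (n + K - (i + 1)) := by
    rw [hrec _ (by omega), sum_Icc_one_eq_sum_range]
  calc t (n + K + 1) + t n
      = ∑ i ∈ range (K + 1), t (n + K - i) := by rw [sum_range_succ, hnext, Nat.add_sub_cancel]
    _ = t (n + K) + t (n + K) := by rw [sum_range_succ', ← hcurr, Nat.sub_zero]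

section Shift

variable {R : Type*}

def seqShift [Semiring R] : Module.End R (ℕ → R) := LinearMap.funLeft R R (· + 1)

theorem seqShift_pow_apply [Semiring R] (n : ℕ) (f : ℕ → R) (j : ℕ) : (seqShift ^ n) f j = f (j + n) := by
  induction n generalizing j with
  | zero => rfl
  | succ n ih =>
    rw [pow_succ', Module.End.mul_apply]
    exact (ih (j + 1)).trans (congrArg f (by omega))

theorem exists_forall_add_two_pow_mul_eq [CommRing R] {f : ℕ → R} {K : ℕ}
    (hf : ∀ n, f (n + K + 1) + f n = 2 * f (n + K)) (l : ℕ) :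
    ∃ g : ℕ → R, ∀ n, f (n + 2 ^ l * (K + 1)) = f n + 2 ^ (l + 1) * g n := by
  obtain ⟨y, q, hq⟩ := exists_sub_two_mul_pow_add_one_dvd (X : R[X]) K l
  have hann : aeval seqShift (X ^ (K + 1) - 2 * X ^ K + 1 : R[X]) f = 0 := by
    ext n
    simp [seqShift_pow_apply, map_ofNat, ← add_assoc, ← hf n]
  have hkill : aeval seqShift (X ^ (2 ^ l * (K + 1)) - (1 + 2 ^ (l + 1) * y) : R[X]) f = 0 := by
    rw [hq, mul_comm, map_mul, Module.End.mul_apply, hann, map_zero]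
  refine ⟨aeval seqShift y f, fun n => ?_⟩
  have := congrFun hkill n
  rw [← Nat.cast_two (R := R[X]), ← Nat.cast_pow] at this
  simp only [map_sub, map_add, map_mul, map_pow, map_one, map_natCast, aeval_X, LinearMap.sub_apply,
    LinearMap.add_apply, Module.End.mul_apply, Module.End.natCast_apply, Module.End.one_apply,
    Pi.sub_apply, Pi.add_apply, nsmul_eq_mul, Pi.zero_apply, seqShift_pow_apply, sub_eq_zero] at this
  exact_mod_cast this

end Shift

theorem twoknacci_congruence_general (k : ℕ) (t : ℕ → ℕ)
    (hrec : ∀ n, 2 * k ≤ n → t n = ∑ i ∈ Finset.Icc 1 (2 * k), t (n - i)) :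
    ∀ l j : ℕ, j ≤ 2 * k - 1 →
      t (2 ^ l * (2 * k + 1) + j) ≡ t j [MOD 2 ^ (l + 1)] := by
  intro l j _
  have hlin (n : ℕ) : (t (n + 2 * k + 1) : ℤ) + t n = 2 * t (n + 2 * k) := by
    exact_mod_cast (add_eq_add_of_forall_eq_sum_Icc hrec n).trans (two_mul _).symm
  obtain ⟨g, hg⟩ := exists_forall_add_two_pow_mul_eq (f := fun n => (t n : ℤ)) hlin l
  refine (Nat.modEq_iff_dvd.mpr ⟨g j, ?_⟩).symm
  push_cast
  rw [add_comm, hg]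
  ring

theorem twoknacci_congruence (k : ℕ) (hk : 2 ≤ k) (t : ℕ → ℕ)
    (h0 : t 0 = 0)
    (h1 : ∀ n, 1 ≤ n → n ≤ 2 * k - 1 → t n = 1)
    (hrec : ∀ n, 2 * k ≤ n → t n = ∑ i ∈ Finset.Icc 1 (2 * k), t (n - i)) :
    ∀ l j : ℕ, j ≤ 2 * k - 1 →
      t (2 ^ l * (2 * k + 1) + j) ≡ t j [MOD 2 ^ (l + 1)] :=
  twoknacci_congruence_general k t hrec
end

section
/- Let k ≥ 2 and let {t_n} be the 2k-nacci sequence. Then for all n ≥ 0 and 0 ≤ i ≤ 2k-1, t_{n+2k+1+i} = 2·2^i · Σ_{j=0}^{2k-1} t_{n+j} − Σ_{j=0}^{i} 2^{i-j} t_{n+j}. -/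
/-! Each term `t (n + m)` of an order-`m` additive recurrence is the sum of the window of the `m`
preceding terms, so comparing two consecutive windows gives the linear relation
`t (n + m + 1) = 2 t (n + m) - t n`. Iterating it `i` times produces the formula, in which the
window sum `∑ j < 2k, t (n + j)` stands for `t (n + 2k)`. -/

open Finset

section WindowRecurrence

variable {m : ℕ} {t : ℕ → ℕ}

theorem add_eq_sum_range_of_rec (hrec : ∀ n, m ≤ n → t n = ∑ i ∈ Icc 1 m, t (n - i)) (n : ℕ) :
    t (n + m) = ∑ j ∈ range m, t (n + j) := by
  rw [hrec (n + m) (Nat.le_add_left m n)]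
  refine sum_nbij' (m - ·) (m - ·) ?_ ?_ ?_ ?_ ?_ <;> intro i hi <;>
    simp only [mem_Icc, mem_range] at hi ⊢
  all_goals first | omega | (congr 1; omega)

theorem succ_add_add_eq_two_mul_of_rec (hrec : ∀ n, m ≤ n → t n = ∑ i ∈ Icc 1 m, t (n - i))
    (n : ℕ) : t (n + m + 1) + t n = 2 * t (n + m) := by
  have hsucc := add_eq_sum_range_of_rec hrec (n + 1)
  have hn := add_eq_sum_range_of_rec hrec n
  have hsplit := sum_range_succ' (fun j => t (n + j)) m
  rw [sum_range_succ] at hsplit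
  simp only [add_assoc, add_comm 1, add_zero] at hsplit hsucc ⊢
  omega

end WindowRecurrence

theorem sum_range_succ_two_pow_mul (u : ℕ → ℤ) (i : ℕ) :
    ∑ j ∈ range (i + 2), 2 ^ (i + 1 - j) * u j =
      2 * ∑ j ∈ range (i + 1), 2 ^ (i - j) * u j + u (i + 1) := by
  rw [sum_range_succ, Nat.sub_self, pow_zero, one_mul, mul_sum]
  congr 1
  refine sum_congr rfl fun j hj => ?_
  rw [Nat.sub_add_comm (mem_range_succ_iff.mp hj), pow_succ]
  ring

theorem push_formula_of_eq_two_mul_sub {m : ℕ} {u : ℕ → ℤ}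
    (hu : ∀ n, u (n + m + 1) = 2 * u (n + m) - u n) (n i : ℕ) :
    u (n + m + 1 + i) =
      2 * 2 ^ i * u (n + m) - ∑ j ∈ range (i + 1), 2 ^ (i - j) * u (n + j) := by
  induction i with
  | zero => simp [hu]
  | succ i ih =>
    have hstep := hu (n + (i + 1))
    rw [show n + (i + 1) + m = n + m + 1 + i by ring] at hstep
    rw [sum_range_succ_two_pow_mul (fun j => u (n + j)), ← add_assoc, hstep, ih, pow_succ]
    ring

theorem twoknacci_push_formula_general (k : ℕ) (t : ℕ → ℕ)
    (hrec : ∀ n, 2 * k ≤ n → t n = ∑ i ∈ Finset.Icc 1 (2 * k), t (n - i)) :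
    ∀ n i : ℕ, i ≤ 2 * k - 1 →
      (t (n + 2 * k + 1 + i) : ℤ) =
        2 * 2 ^ i * ∑ j ∈ Finset.range (2 * k), (t (n + j) : ℤ) -
          ∑ j ∈ Finset.range (i + 1), 2 ^ (i - j) * (t (n + j) : ℤ) := by
  intro n i _
  have hu : ∀ n, (t (n + 2 * k + 1) : ℤ) = 2 * t (n + 2 * k) - t n := fun n => by
    have := succ_add_add_eq_two_mul_of_rec hrec n
    omega
  rw [push_formula_of_eq_two_mul_sub (u := fun j => (t j : ℤ)) hu, add_eq_sum_range_of_rec hrec,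
    Nat.cast_sum]

theorem twoknacci_push_formula (k : ℕ) (hk : 2 ≤ k) (t : ℕ → ℕ)
    (h0 : t 0 = 0)
    (h1 : ∀ n, 1 ≤ n → n ≤ 2 * k - 1 → t n = 1)
    (hrec : ∀ n, 2 * k ≤ n → t n = ∑ i ∈ Finset.Icc 1 (2 * k), t (n - i)) :
    ∀ n i : ℕ, i ≤ 2 * k - 1 →
      (t (n + 2 * k + 1 + i) : ℤ) =
        2 * 2 ^ i * ∑ j ∈ Finset.range (2 * k), (t (n + j) : ℤ) -
          ∑ j ∈ Finset.range (i + 1), 2 ^ (i - j) * (t (n + j) : ℤ) :=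
  twoknacci_push_formula_general k t hrec
end
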